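/- (C1 via a linearized product condition.) Suppose that for every line (i,j) ∈ E the 2×2 matrix M_{ij} with entries M₁₁ = ∏_{(k,l)∈P_j}(1 − 2 r_kl P̂⁺_kl(p̄)/v̲_k), M₁₂ = −Σ_{(k,l)∈P_j} 2 r_kl Q̂⁺_kl(q̄)/v̲_k, M₂₁ = −Σ_{(k,l)∈P_j} 2 x_kl P̂⁺_kl(p̄)/v̲_k, M₂₂ = ∏_{(k,l)∈P_j}(1 − 2 x_kl Q̂⁺_kl(q̄)/v̲_k) satisfies M_{ij} (r_ij, x_ij)ᵀ > 0 componentwise. Then C1 holds: A̲_{l_s} ⋯ A̲_{l_{t−1}} u_{l_t} > 0 componentwise for every leaf l and all 1 ≤ s ≤ t ≤ n_l. -/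

import Mathlib

open Classical Finset

noncomputable section

/-- Product `A (bus s) * A (bus (s+1)) * ⋯ * A (bus (t-1))` applied to the vector `u`
(the empty product, when `s ≥ t`, is the identity). -/
def chainApply (A : ℕ → Matrix (Fin 2) (Fin 2) ℝ) (bus : ℕ → ℕ) (s t : ℕ)
    (u : Fin 2 → ℝ) : Fin 2 → ℝ :=
  if _ : s < t then (A (bus s)).mulVec (chainApply A bus (s + 1) t u) else u
termination_by t - s

/-- Number of steps from bus `l` to the root `0` along the parent map `par`
(the depth `n_l` of bus `l` in the tree). -/
def depth (par : ℕ → ℕ) (l : ℕ) : ℕ :=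
  if h : ∃ k, par^[k] l = 0 then Nat.find h else 0

/-- Bus `i` lies on the path `P_h` from bus `h` to the root. -/
def onPath (par : ℕ → ℕ) (i h : ℕ) : Prop := ∃ k, par^[k] h = i

/-- `P̂_{i,par i}(p) = Σ_{h : i ∈ P_h} p_h`, the linear-DistFlow power flow on line `(i, par i)`. -/
def hatP (n : ℕ) (par : ℕ → ℕ) (p : ℕ → ℝ) (i : ℕ) : ℝ :=
  ∑ h ∈ (Finset.Icc 1 n).filter (fun h => onPath par i h), p h

/-- The vector `u_i = (r_{i,par i}, x_{i,par i})ᵀ`. -/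
def uvec (r x : ℕ → ℝ) (i : ℕ) : Fin 2 → ℝ := ![r i, x i]

/-- The matrix `A̲_i = I − (2/v̲_i) u_i (P̂⁺_i(p̄), Q̂⁺_i(q̄))`. -/
def Amat (n : ℕ) (par : ℕ → ℕ) (r x vlow p q : ℕ → ℝ) (i : ℕ) :
    Matrix (Fin 2) (Fin 2) ℝ :=
  1 - (2 / vlow i) •
    Matrix.of (fun a b => uvec r x i a * ![max (hatP n par p i) 0, max (hatP n par q i) 0] b)

/-- A leaf bus: a bus in `{1,…,n}` with no children. -/
def IsLeaf (n : ℕ) (par : ℕ → ℕ) (l : ℕ) : Prop :=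
  1 ≤ l ∧ l ≤ n ∧ ∀ i, 1 ≤ i → i ≤ n → par i ≠ l

/-- Condition C1: `A̲_{l_s} ⋯ A̲_{l_{t-1}} u_{l_t} > 0` componentwise for every leaf `l`
and all `1 ≤ s ≤ t ≤ n_l`, where `l_k = par^[n_l − k] l`. -/
def C1 (n : ℕ) (par : ℕ → ℕ) (r x vlow p q : ℕ → ℝ) : Prop :=
  ∀ l, IsLeaf n par l → ∀ s t, 1 ≤ s → s ≤ t → t ≤ depth par l →
    ∀ a, 0 < chainApply (Amat n par r x vlow p q) (fun k => par^[depth par l - k] l) s t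
      (uvec r x (par^[depth par l - t] l)) a

/-- The matrix of Claim 6: for a bus `j`, entries built from products/sums over the lines
`(k,l) ∈ P_j` on the path from `j` to the root (upper endpoints `par^[m] j`, `m < depth j`). -/
def Mmat (n : ℕ) (par : ℕ → ℕ) (r x vlow p q : ℕ → ℝ) (j : ℕ) :
    Matrix (Fin 2) (Fin 2) ℝ :=
  !![∏ m ∈ Finset.range (depth par j),
        (1 - 2 * r (par^[m] j) * max (hatP n par p (par^[m] j)) 0 / vlow (par^[m] j)),
     -∑ m ∈ Finset.range (depth par j),
        2 * r (par^[m] j) * max (hatP n par q (par^[m] j)) 0 / vlow (par^[m] j);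
     -∑ m ∈ Finset.range (depth par j),
        2 * x (par^[m] j) * max (hatP n par p (par^[m] j)) 0 / vlow (par^[m] j),
     ∏ m ∈ Finset.range (depth par j),
        (1 - 2 * x (par^[m] j) * max (hatP n par q (par^[m] j)) 0 / vlow (par^[m] j))]

/-!
Write `a_k, b_k, c_k, d_k ≥ 0` for the coefficients `2 r P̂⁺/v̲`, `2 r Q̂⁺/v̲`, `2 x P̂⁺/v̲`,
`2 x Q̂⁺/v̲` of line `l_k`, so that `A̲_{l_k} = [[1 - a_k, -b_k], [-c_k, 1 - d_k]]`. The hypothesis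
on line `l_m` says that `(∏_{k<m} (1 - a_k)) r - (∑_{k<m} b_k) x > 0` (and symmetrically), with
`(r, x)` the impedance of `l_m`; on every prefix of the path this makes the products of the
diagonal entries positive, hence every `1 - a_k, 1 - d_k ∈ (0, 1]`. Dropping lines from the front
only increases these lower bounds, so the hypothesis on `l_t` holds for the lines
`l_s, …, l_{t-1}`. Then `w = A̲_{l_k} ⋯ A̲_{l_{t-1}} u_{l_t}` stays, as `k` decreases from `t` to
`s`, in the box between `((∏ (1 - a)) r - (∑ b) x, (∏ (1 - d)) x - (∑ c) r)` and `(r, x)`, whose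
lower corner is positive.
-/

section RowMargin

variable {R : Type*} [CommRing R] [LinearOrder R] [IsStrictOrderedRing R]

-- The rows of `M_{ij} (r_ij, x_ij)ᵀ` have this form, with `S` indexing the lines of `P_j`.
def rowMargin (α β : ℕ → R) (S : Finset ℕ) (r x : R) : R :=
  (∏ k ∈ S, α k) * r - (∑ k ∈ S, β k) * x

theorem rowMargin_le_of_subset {α β : ℕ → R} {S T : Finset ℕ} {r x : R} (hST : S ⊆ T)
    (hα₀ : ∀ k ∈ T, 0 ≤ α k) (hα₁ : ∀ k ∈ T, α k ≤ 1) (hβ : ∀ k ∈ T, 0 ≤ β k)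
    (hr : 0 ≤ r) (hx : 0 ≤ x) :
    rowMargin α β T r x ≤ rowMargin α β S r x := by
  have hprod : ∏ k ∈ T, α k ≤ ∏ k ∈ S, α k :=
    prod_le_prod_of_subset_of_le_one hST hα₀ fun k hk _ => hα₁ k hk
  have hsum : ∑ k ∈ S, β k ≤ ∑ k ∈ T, β k :=
    sum_le_sum_of_subset_of_nonneg hST fun k hk _ => hβ k hk
  unfold rowMargin
  nlinarith [mul_le_mul_of_nonneg_right hprod hr, mul_le_mul_of_nonneg_right hsum hx]

theorem prod_pos_of_rowMargin_pos {α β : ℕ → R} {S : Finset ℕ} {r x : R}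
    (h : 0 < rowMargin α β S r x) (hβ : ∀ k ∈ S, 0 ≤ β k) (hr : 0 ≤ r) (hx : 0 ≤ x) :
    0 < ∏ k ∈ S, α k := by
  have : 0 ≤ (∑ k ∈ S, β k) * x := mul_nonneg (sum_nonneg hβ) hx
  exact pos_of_mul_pos_left (by unfold rowMargin at h; linarith) hr

theorem rowMargin_Ico_le_of_lt {α β : ℕ → R} {k t : ℕ} (hkt : k < t) {r x w₀ w₁ : R}
    (hα₀ : 0 ≤ α k) (hα₁ : α k ≤ 1) (hβ : 0 ≤ β k) (hβ' : ∀ m ∈ Ico (k + 1) t, 0 ≤ β m)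
    (hx : 0 ≤ x) (hw₀ : rowMargin α β (Ico (k + 1) t) r x ≤ w₀) (hw₁ : w₁ ≤ x) :
    rowMargin α β (Ico k t) r x ≤ α k * w₀ - β k * w₁ := by
  have hS : 0 ≤ (∑ m ∈ Ico (k + 1) t, β m) * x := mul_nonneg (sum_nonneg hβ') hx
  unfold rowMargin at hw₀ ⊢
  rw [prod_eq_prod_Ico_succ_bot hkt, sum_eq_sum_Ico_succ_bot hkt]
  nlinarith [mul_le_mul_of_nonneg_left hw₀ hα₀, mul_le_of_le_one_left hS hα₁,
    mul_le_mul_of_nonneg_left hw₁ hβ]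

theorem pos_of_prod_Ico_pos {f : ℕ → R} {a b : ℕ} (h : ∀ m ∈ Icc a b, 0 < ∏ k ∈ Ico a m, f k) :
    ∀ k ∈ Ico a b, 0 < f k := by
  intro k hk
  rw [mem_Ico] at hk
  have hsucc := h (k + 1) (mem_Icc.2 ⟨by omega, hk.2⟩)
  rw [prod_Ico_succ_top hk.1] at hsucc
  exact pos_of_mul_pos_right hsucc (h k (mem_Icc.2 ⟨hk.1, hk.2.le⟩)).le

end RowMargin

section Chain

variable (A : ℕ → Matrix (Fin 2) (Fin 2) ℝ) (bus : ℕ → ℕ)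

theorem chainApply_self (t : ℕ) (u : Fin 2 → ℝ) : chainApply A bus t t u = u := by
  rw [chainApply, dif_neg (lt_irrefl t)]

theorem chainApply_of_lt {s t : ℕ} (hst : s < t) (u : Fin 2 → ℝ) :
    chainApply A bus s t u = (A (bus s)).mulVec (chainApply A bus (s + 1) t u) := by
  rw [chainApply, dif_pos hst]

variable {A bus} {α β γ δ : ℕ → ℝ} {s t : ℕ} {r x : ℝ}

theorem chainApply_bounds (hr : 0 ≤ r) (hx : 0 ≤ x)
    (hA : ∀ k ∈ Ico s t, A (bus k) = !![α k, -β k; -γ k, δ k])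
    (hα : ∀ k ∈ Ico s t, α k ∈ Set.Icc 0 1) (hδ : ∀ k ∈ Ico s t, δ k ∈ Set.Icc 0 1)
    (hβ : ∀ k ∈ Ico s t, 0 ≤ β k) (hγ : ∀ k ∈ Ico s t, 0 ≤ γ k)
    (h₀ : 0 < rowMargin α β (Ico s t) r x) (h₁ : 0 < rowMargin δ γ (Ico s t) x r)
    {k : ℕ} (hsk : s ≤ k) (hkt : k ≤ t) :
    let w := chainApply A bus k t ![r, x]
    (rowMargin α β (Ico k t) r x ≤ w 0 ∧ w 0 ≤ r) ∧
      (rowMargin δ γ (Ico k t) x r ≤ w 1 ∧ w 1 ≤ x) := by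
  induction hkt using Nat.decreasingInduction with
  | self => simp [chainApply_self, rowMargin]
  | of_succ k hkt ih =>
    obtain ⟨⟨hw₀, hw₀r⟩, hw₁, hw₁x⟩ := ih (by omega)
    set w := chainApply A bus (k + 1) t ![r, x]
    have hsub : Ico (k + 1) t ⊆ Ico s t := Ico_subset_Ico (by omega) le_rfl
    have hk : k ∈ Ico s t := mem_Ico.2 ⟨hsk, hkt⟩
    have hw₀pos : 0 < w 0 := h₀.trans_le <| (rowMargin_le_of_subset hsub
      (fun m hm => (hα m hm).1) (fun m hm => (hα m hm).2) hβ hr hx).trans hw₀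
    have hw₁pos : 0 < w 1 := h₁.trans_le <| (rowMargin_le_of_subset hsub
      (fun m hm => (hδ m hm).1) (fun m hm => (hδ m hm).2) hγ hx hr).trans hw₁
    have low₀ := rowMargin_Ico_le_of_lt hkt (hα k hk).1 (hα k hk).2 (hβ k hk)
      (fun m hm => hβ m (hsub hm)) hx hw₀ hw₁x
    have low₁ := rowMargin_Ico_le_of_lt hkt (hδ k hk).1 (hδ k hk).2 (hγ k hk)
      (fun m hm => hγ m (hsub hm)) hr hw₁ hw₀r
    have hstep :
        chainApply A bus k t ![r, x] = ![α k * w 0 - β k * w 1, δ k * w 1 - γ k * w 0] := by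
      rw [chainApply_of_lt A bus hkt, hA k hk, Matrix.mulVec_fin_two]
      ext i; fin_cases i <;> simp <;> ring
    simp only [hstep, Matrix.cons_val_zero, Matrix.cons_val_one]
    refine ⟨⟨by linarith, ?_⟩, by linarith, ?_⟩
    · nlinarith [(hα k hk).1, (hα k hk).2, hβ k hk]
    · nlinarith [(hδ k hk).1, (hδ k hk).2, hγ k hk]

theorem chainApply_pos (hr : 0 ≤ r) (hx : 0 ≤ x)
    (hA : ∀ k ∈ Ico s t, A (bus k) = !![α k, -β k; -γ k, δ k])
    (hα : ∀ k ∈ Ico s t, α k ∈ Set.Icc 0 1) (hδ : ∀ k ∈ Ico s t, δ k ∈ Set.Icc 0 1)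
    (hβ : ∀ k ∈ Ico s t, 0 ≤ β k) (hγ : ∀ k ∈ Ico s t, 0 ≤ γ k)
    (h₀ : 0 < rowMargin α β (Ico s t) r x) (h₁ : 0 < rowMargin δ γ (Ico s t) x r)
    (hst : s ≤ t) (a : Fin 2) :
    0 < chainApply A bus s t ![r, x] a := by
  obtain ⟨⟨hw₀, -⟩, hw₁, -⟩ := chainApply_bounds hr hx hA hα hδ hβ hγ h₀ h₁ le_rfl hst
  fin_cases a
  · exact h₀.trans_le hw₀
  · exact h₁.trans_le hw₁

theorem chainApply_pos_of_prefix_rowMargin_pos {a : ℕ} {ρ ξ : ℕ → ℝ}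
    (hA : ∀ k ∈ Ico a t, A (bus k) = !![α k, -β k; -γ k, δ k])
    (hα : ∀ k ∈ Ico a t, α k ≤ 1) (hδ : ∀ k ∈ Ico a t, δ k ≤ 1)
    (hβ : ∀ k ∈ Ico a t, 0 ≤ β k) (hγ : ∀ k ∈ Ico a t, 0 ≤ γ k)
    (hρ : ∀ m ∈ Icc a t, 0 ≤ ρ m) (hξ : ∀ m ∈ Icc a t, 0 ≤ ξ m)
    (hM : ∀ m ∈ Icc a t, 0 < rowMargin α β (Ico a m) (ρ m) (ξ m) ∧
      0 < rowMargin δ γ (Ico a m) (ξ m) (ρ m))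
    (has : a ≤ s) (hst : s ≤ t) (i : Fin 2) :
    0 < chainApply A bus s t ![ρ t, ξ t] i := by
  have hprefix : ∀ m ∈ Icc a t, Ico a m ⊆ Ico a t := fun m hm =>
    Ico_subset_Ico_right (mem_Icc.1 hm).2
  have hα₀ : ∀ k ∈ Ico a t, 0 < α k := pos_of_prod_Ico_pos fun m hm =>
    prod_pos_of_rowMargin_pos (hM m hm).1 (fun k hk => hβ k (hprefix m hm hk))
      (hρ m hm) (hξ m hm)
  have hδ₀ : ∀ k ∈ Ico a t, 0 < δ k := pos_of_prod_Ico_pos fun m hm =>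
    prod_pos_of_rowMargin_pos (hM m hm).2 (fun k hk => hγ k (hprefix m hm hk))
      (hξ m hm) (hρ m hm)
  have ht : t ∈ Icc a t := mem_Icc.2 ⟨has.trans hst, le_rfl⟩
  have hsub : Ico s t ⊆ Ico a t := Ico_subset_Ico_left has
  exact chainApply_pos (hρ t ht) (hξ t ht) (fun k hk => hA k (hsub hk))
    (fun k hk => ⟨(hα₀ k (hsub hk)).le, hα k (hsub hk)⟩)
    (fun k hk => ⟨(hδ₀ k (hsub hk)).le, hδ k (hsub hk)⟩)
    (fun k hk => hβ k (hsub hk)) (fun k hk => hγ k (hsub hk))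
    ((hM t ht).1.trans_le (rowMargin_le_of_subset hsub (fun k hk => (hα₀ k hk).le) hα hβ
      (hρ t ht) (hξ t ht)))
    ((hM t ht).2.trans_le (rowMargin_le_of_subset hsub (fun k hk => (hδ₀ k hk).le) hδ hγ
      (hξ t ht) (hρ t ht)))
    hst i

end Chain

section Tree

variable {par : ℕ → ℕ}

theorem exists_iterate_eq_zero (hpar : ∀ i, 1 ≤ i → par i < i) (l : ℕ) :
    ∃ k, par^[k] l = 0 := by
  induction l using Nat.strong_induction_on with
  | _ l ih =>
    rcases Nat.eq_zero_or_pos l with rfl | hl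
    · exact ⟨0, rfl⟩
    · obtain ⟨k, hk⟩ := ih (par l) (hpar l hl)
      exact ⟨k + 1, by rwa [Function.iterate_succ_apply]⟩

theorem depth_eq_find (hpar : ∀ i, 1 ≤ i → par i < i) (l : ℕ) :
    depth par l = Nat.find (exists_iterate_eq_zero hpar l) :=
  dif_pos (exists_iterate_eq_zero hpar l)

theorem iterate_depth (hpar : ∀ i, 1 ≤ i → par i < i) (l : ℕ) :
    par^[depth par l] l = 0 := by
  rw [depth_eq_find hpar]
  exact Nat.find_spec (exists_iterate_eq_zero hpar l)

theorem iterate_ne_zero_of_lt_depth {k l : ℕ} (hk : k < depth par l) : par^[k] l ≠ 0 := by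
  unfold depth at hk
  split_ifs at hk with h
  · exact Nat.find_min h hk
  · omega

theorem depth_iterate (hpar : ∀ i, 1 ≤ i → par i < i) {k l : ℕ} (hk : k ≤ depth par l) :
    depth par (par^[k] l) = depth par l - k := by
  rw [depth_eq_find hpar, Nat.find_eq_iff, ← Function.iterate_add_apply,
    Nat.sub_add_cancel hk]
  refine ⟨iterate_depth hpar l, fun m hm => ?_⟩
  rw [← Function.iterate_add_apply]
  exact iterate_ne_zero_of_lt_depth (by omega)

theorem iterate_le_self_of_le_depth (hpar : ∀ i, 1 ≤ i → par i < i) {k l : ℕ}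
    (hk : k ≤ depth par l) : par^[k] l ≤ l := by
  induction k with
  | zero => exact le_rfl
  | succ k ih =>
    rw [Function.iterate_succ_apply']
    have hne : par^[k] l ≠ 0 := iterate_ne_zero_of_lt_depth hk
    exact (hpar _ (Nat.one_le_iff_ne_zero.2 hne)).le.trans (ih (by omega))

def pathBus (par : ℕ → ℕ) (l k : ℕ) : ℕ := par^[depth par l - k] l

variable {l k m : ℕ}

theorem one_le_pathBus (hk₁ : 1 ≤ k) (hk : k ≤ depth par l) : 1 ≤ pathBus par l k :=
  Nat.one_le_iff_ne_zero.2 (iterate_ne_zero_of_lt_depth (by omega))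

theorem pathBus_le (hpar : ∀ i, 1 ≤ i → par i < i) : pathBus par l k ≤ l :=
  iterate_le_self_of_le_depth hpar (Nat.sub_le _ _)

theorem iterate_pathBus {j : ℕ} (hj : j ≤ m) (hm : m ≤ depth par l) :
    par^[j] (pathBus par l m) = pathBus par l (m - j) := by
  rw [pathBus, pathBus, ← Function.iterate_add_apply]
  congr 1
  omega

theorem depth_pathBus (hpar : ∀ i, 1 ≤ i → par i < i) (hm : m ≤ depth par l) :
    depth par (pathBus par l m) = m := by
  rw [pathBus, depth_iterate hpar (Nat.sub_le _ _)]
  omega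

theorem prod_range_depth_pathBus (hpar : ∀ i, 1 ≤ i → par i < i) {M : Type*} [CommMonoid M]
    (g : ℕ → M) (hm : m ≤ depth par l) :
    ∏ j ∈ range (depth par (pathBus par l m)), g (par^[j] (pathBus par l m)) =
      ∏ k ∈ Ico 1 (m + 1), g (pathBus par l k) := by
  rw [depth_pathBus hpar hm, range_eq_Ico,
    prod_congr rfl fun j hj => by rw [iterate_pathBus (mem_Ico.1 hj).2.le hm],
    prod_Ico_reflect (fun k => g (pathBus par l k)) 0 (Nat.le_succ m)]
  simp

theorem sum_range_depth_pathBus (hpar : ∀ i, 1 ≤ i → par i < i) {M : Type*} [AddCommMonoid M]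
    (g : ℕ → M) (hm : m ≤ depth par l) :
    ∑ j ∈ range (depth par (pathBus par l m)), g (par^[j] (pathBus par l m)) =
      ∑ k ∈ Ico 1 (m + 1), g (pathBus par l k) :=
  prod_range_depth_pathBus (M := Multiplicative M) hpar g hm

end Tree

section Network

variable {n : ℕ} {par : ℕ → ℕ} {r x vlow p q : ℕ → ℝ}

def lineCoeff (n : ℕ) (par : ℕ → ℕ) (r vlow p : ℕ → ℝ) (i : ℕ) : ℝ :=
  2 * r i * max (hatP n par p i) 0 / vlow i

theorem lineCoeff_nonneg {i : ℕ} (hr : 0 ≤ r i) (hv : 0 ≤ vlow i) :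
    0 ≤ lineCoeff n par r vlow p i := by
  unfold lineCoeff
  positivity

theorem Amat_eq_lineCoeff (i : ℕ) :
    Amat n par r x vlow p q i =
      !![1 - lineCoeff n par r vlow p i, -lineCoeff n par r vlow q i;
        -lineCoeff n par x vlow p i, 1 - lineCoeff n par x vlow q i] := by
  ext a b
  fin_cases a <;> fin_cases b <;> simp [Amat, uvec, lineCoeff] <;> ring

theorem Mmat_eq_lineCoeff (j : ℕ) :
    Mmat n par r x vlow p q j =
      !![∏ m ∈ range (depth par j), (1 - lineCoeff n par r vlow p (par^[m] j)),
        -∑ m ∈ range (depth par j), lineCoeff n par r vlow q (par^[m] j);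
        -∑ m ∈ range (depth par j), lineCoeff n par x vlow p (par^[m] j),
        ∏ m ∈ range (depth par j), (1 - lineCoeff n par x vlow q (par^[m] j))] :=
  rfl

theorem rowMargin_pathBus_pos_of_Mmat (hpar : ∀ i, 1 ≤ i → par i < i) {l m : ℕ}
    (hm₁ : 1 ≤ m) (hm : m ≤ depth par l)
    (hM : ∀ a, 0 < (Mmat n par r x vlow p q (par (pathBus par l m))).mulVec
      (uvec r x (pathBus par l m)) a) :
    0 < rowMargin (fun k => 1 - lineCoeff n par r vlow p (pathBus par l k))
        (fun k => lineCoeff n par r vlow q (pathBus par l k)) (Ico 1 m)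
        (r (pathBus par l m)) (x (pathBus par l m)) ∧
      0 < rowMargin (fun k => 1 - lineCoeff n par x vlow q (pathBus par l k))
        (fun k => lineCoeff n par x vlow p (pathBus par l k)) (Ico 1 m)
        (x (pathBus par l m)) (r (pathBus par l m)) := by
  have hparent : par (pathBus par l m) = pathBus par l (m - 1) :=
    iterate_pathBus (j := 1) hm₁ hm
  have hm' : m - 1 ≤ depth par l := by omega
  have hM₀ := hM 0
  have hM₁ := hM 1
  simp only [hparent, Mmat_eq_lineCoeff,
    prod_range_depth_pathBus hpar (fun i => 1 - lineCoeff n par r vlow p i) hm',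
    prod_range_depth_pathBus hpar (fun i => 1 - lineCoeff n par x vlow q i) hm',
    sum_range_depth_pathBus hpar _ hm', Nat.sub_add_cancel hm₁, Matrix.mulVec_fin_two, uvec,
    Matrix.of_apply, Matrix.cons_val_zero, Matrix.cons_val_one] at hM₀ hM₁
  unfold rowMargin
  constructor <;> linarith

end Network

theorem c1_of_product_condition_general (n : ℕ) (par : ℕ → ℕ) (r x vlow p q : ℕ → ℝ)
    (hpar : ∀ i, 1 ≤ i → par i < i)
    (hr : ∀ i, 1 ≤ i → i ≤ n → 0 < r i) (hx : ∀ i, 1 ≤ i → i ≤ n → 0 < x i)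
    (hv : ∀ i, 1 ≤ i → i ≤ n → 0 < vlow i)
    (hM : ∀ i, 1 ≤ i → i ≤ n →
      ∀ a, 0 < (Mmat n par r x vlow p q (par i)).mulVec (uvec r x i) a) :
    C1 n par r x vlow p q := by
  rintro l ⟨-, hln, -⟩ s t hs hst ht a
  have hbus : ∀ k ∈ Icc 1 t, 1 ≤ pathBus par l k ∧ pathBus par l k ≤ n := fun k hk =>
    ⟨one_le_pathBus (mem_Icc.1 hk).1 ((mem_Icc.1 hk).2.trans ht), (pathBus_le hpar).trans hln⟩
  have hpos : ∀ g : ℕ → ℝ, (∀ i, 1 ≤ i → i ≤ n → 0 < g i) →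
      ∀ k ∈ Icc 1 t, 0 < g (pathBus par l k) := fun g hg k hk =>
    hg _ (hbus k hk).1 (hbus k hk).2
  have hcoef : ∀ g : ℕ → ℝ, (∀ i, 1 ≤ i → i ≤ n → 0 < g i) →
      ∀ w, ∀ k ∈ Ico 1 t, 0 ≤ lineCoeff n par g vlow w (pathBus par l k) := fun g hg w k hk =>
    lineCoeff_nonneg (hpos g hg k (Ico_subset_Icc_self hk)).le
      (hpos vlow hv k (Ico_subset_Icc_self hk)).le
  exact chainApply_pos_of_prefix_rowMargin_pos (ρ := fun k => r (pathBus par l k))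
    (ξ := fun k => x (pathBus par l k)) (fun k _ => Amat_eq_lineCoeff _)
    (fun k hk => sub_le_self _ (hcoef r hr p k hk))
    (fun k hk => sub_le_self _ (hcoef x hx q k hk)) (hcoef r hr q) (hcoef x hx p)
    (fun m hm => (hpos r hr m hm).le) (fun m hm => (hpos x hx m hm).le)
    (fun m hm => rowMargin_pathBus_pos_of_Mmat hpar (mem_Icc.1 hm).1
      ((mem_Icc.1 hm).2.trans ht) (hM _ (hbus m hm).1 (hbus m hm).2))
    hs hst a

/-- Claim 6 / Theorem 4(v): if for every line `(i,j) ∈ E` (so `j = par i`) the matrix `M_{ij}`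
applied to `(r_{ij}, x_{ij})ᵀ` is componentwise strictly positive, then C1 holds. -/
theorem c1_of_product_condition (n : ℕ) (par : ℕ → ℕ) (r x vlow p q : ℕ → ℝ)
    (hpar0 : par 0 = 0) (hpar : ∀ i, 1 ≤ i → par i < i)
    (hr : ∀ i, 1 ≤ i → i ≤ n → 0 < r i) (hx : ∀ i, 1 ≤ i → i ≤ n → 0 < x i)
    (hv : ∀ i, 1 ≤ i → i ≤ n → 0 < vlow i)
    (hM : ∀ i, 1 ≤ i → i ≤ n →
      ∀ a, 0 < (Mmat n par r x vlow p q (par i)).mulVec (uvec r x i) a) :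
    C1 n par r x vlow p q :=
  c1_of_product_condition_general n par r x vlow p q hpar hr hx hv hM
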